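/- arXiv:1701.07084 — 3 statements merged into one kernel-verified Lean document; each statement's English description precedes it below -/
import Mathlib

section
/- Let h be a function analytic on the open unit disc of ℂ such that the integrals ∫₀^{2π} log(1 + |h(r e^{iθ})|) dθ are uniformly bounded over r ∈ (0,1) (i.e., h belongs to the Nevanlinna class N). Define g on the open unit disc by g(z) = (h(z) − h(0))/z for z ≠ 0 and g(0) = h′(0). Then g is analytic on the open unit disc and the integrals ∫₀^{2π} log(1 + |g(r e^{iθ})|) dθ are uniformly bounded over r ∈ (0,1) (i.e., g belongs to the Nevanlinna class N). -/
/-!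
The divided difference `g z = (h z - h 0) / z` is `dslope h 0`, which is holomorphic by the
removable singularity theorem. On `|z| ≤ 1/2` it is bounded by compactness. On `|z| ≥ ρ` with
`ρ ≤ 1` one has `1 + |g z| ≤ (1 + |h z|) (1 + |h 0|) / ρ`, and taking logarithms bounds the
circle average of `log (1 + |g|)` by that of `log (1 + |h|)` plus a constant.
-/

open Metric Real Set

theorem dslope_zero_eq_ite {𝕜 : Type*} [NontriviallyNormedField 𝕜] [DecidableEq 𝕜]
    (f : 𝕜 → 𝕜) :
    dslope f 0 = fun z => if z = 0 then deriv f 0 else (f z - f 0) / z := by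
  funext z
  split_ifs with hz
  · rw [hz, dslope_same]
  · rw [dslope_of_ne _ hz, slope_def_field, sub_zero]

section LogOneAddNorm

variable {E : Type*} [NormedAddCommGroup E]

theorem integral_log_one_add_norm_eq_circleAverage (f : ℂ → E) (r : ℝ) :
    ∫ θ in (0 : ℝ)..2 * π, log (1 + ‖f (r * Complex.exp (θ * Complex.I))‖) =
      2 * π * circleAverage (fun z => log (1 + ‖f z‖)) 0 r := by
  rw [circleAverage_def, smul_eq_mul, ← mul_assoc, mul_inv_cancel₀ two_pi_pos.ne', one_mul]
  simp only [circleMap_zero]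

theorem ContinuousOn.circleIntegrable_log_one_add_norm {f : ℂ → E} {c : ℂ} {R : ℝ}
    (hf : ContinuousOn f (sphere c |R|)) :
    CircleIntegrable (fun z => Real.log (1 + ‖f z‖)) c R :=
  ContinuousOn.circleIntegrable' <|
    ContinuousOn.log (continuousOn_const.add hf.norm) fun _ _ => by positivity

variable {𝕜 : Type*} [NontriviallyNormedField 𝕜] [NormedSpace 𝕜 E]

theorem log_one_add_norm_dslope_le (f : 𝕜 → E) {a z : 𝕜} {ρ : ℝ} (hρ : 0 < ρ) (hρ₁ : ρ ≤ 1)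
    (hz : ρ ≤ ‖z - a‖) :
    log (1 + ‖dslope f a z‖) ≤ log (1 + ‖f z‖) + log (1 + ‖f a‖) - log ρ := by
  have hza : z ≠ a := sub_ne_zero.1 (norm_pos_iff.1 (hρ.trans_le hz))
  have hslope : ‖dslope f a z‖ ≤ (‖f z‖ + ‖f a‖) / ρ := by
    rw [dslope_of_ne _ hza, slope, norm_smul, norm_inv, inv_mul_eq_div]
    exact div_le_div₀ (by positivity) (norm_sub_le _ _) hρ hz
  have hprod : 1 + ‖dslope f a z‖ ≤ (1 + ‖f z‖) * (1 + ‖f a‖) / ρ := by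
    calc 1 + ‖dslope f a z‖ ≤ 1 / ρ + (‖f z‖ + ‖f a‖) / ρ :=
          add_le_add ((one_le_div hρ).2 hρ₁) hslope
      _ = (1 + ‖f z‖ + ‖f a‖) / ρ := by ring
      _ ≤ (1 + ‖f z‖) * (1 + ‖f a‖) / ρ := by
          gcongr; nlinarith [norm_nonneg (f z), norm_nonneg (f a)]
  calc log (1 + ‖dslope f a z‖) ≤ log ((1 + ‖f z‖) * (1 + ‖f a‖) / ρ) :=
        log_le_log (by positivity) hprod
    _ = log (1 + ‖f z‖) + log (1 + ‖f a‖) - log ρ := by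
        rw [log_div (by positivity) hρ.ne', log_mul (by positivity) (by positivity)]

end LogOneAddNorm

section DSlope

variable {E : Type*} [NormedAddCommGroup E] [NormedSpace ℂ E]

theorem circleAverage_log_one_add_norm_dslope_le {f : ℂ → E} {a : ℂ} {R ρ : ℝ}
    (hf : ContinuousOn f (sphere a |R|)) (hdf : ContinuousOn (dslope f a) (sphere a |R|))
    (hρ : 0 < ρ) (hρ₁ : ρ ≤ 1) (hR : ρ ≤ |R|) :
    circleAverage (fun z => log (1 + ‖dslope f a z‖)) a R ≤
      circleAverage (fun z => log (1 + ‖f z‖)) a R + log (1 + ‖f a‖) - log ρ := by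
  have hfint := hf.circleIntegrable_log_one_add_norm
  have hconst : CircleIntegrable (fun _ => log (1 + ‖f a‖) - log ρ) a R :=
    continuousOn_const.circleIntegrable'
  calc circleAverage (fun z => log (1 + ‖dslope f a z‖)) a R
      ≤ circleAverage (fun z => log (1 + ‖f z‖) + (log (1 + ‖f a‖) - log ρ)) a R :=
        circleAverage_mono hdf.circleIntegrable_log_one_add_norm (hfint.add hconst)
          fun z hz => by
            rw [← add_sub_assoc]
            exact log_one_add_norm_dslope_le f hρ hρ₁ (by rwa [← dist_eq_norm, mem_sphere.1 hz])
    _ = circleAverage (fun z => log (1 + ‖f z‖)) a R + log (1 + ‖f a‖) - log ρ := by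
        rw [circleAverage_fun_add hfint hconst, circleAverage_const, add_sub_assoc]

theorem exists_circleAverage_log_one_add_norm_dslope_le [CompleteSpace E] {f : ℂ → E}
    (hf : DifferentiableOn ℂ f (ball 0 1)) {M : ℝ}
    (hM : ∀ r ∈ Ioo (0 : ℝ) 1, circleAverage (fun z => log (1 + ‖f z‖)) 0 r ≤ M) :
    ∃ M', ∀ r ∈ Ioo (0 : ℝ) 1, circleAverage (fun z => log (1 + ‖dslope f 0 z‖)) 0 r ≤ M' := by
  have hdf : DifferentiableOn ℂ (dslope f 0) (ball 0 1) :=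
    (Complex.differentiableOn_dslope (ball_mem_nhds 0 one_pos)).2 hf
  obtain ⟨C, hC⟩ := (isCompact_closedBall (0 : ℂ) (1 / 2)).exists_bound_of_continuousOn
    (hdf.continuousOn.mono (closedBall_subset_ball (by norm_num)))
  refine ⟨max (log (1 + C)) (M + log (1 + ‖f 0‖) - log (1 / 2)), fun r ⟨hr₀, hr₁⟩ => ?_⟩
  have hsphere : sphere (0 : ℂ) |r| ⊆ ball 0 1 :=
    sphere_subset_ball (by rwa [abs_of_pos hr₀])
  rcases le_or_gt r (1 / 2) with hr | hr
  · refine le_max_of_le_left (circleAverage_mono_on_of_le_circle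
      (hdf.continuousOn.mono hsphere).circleIntegrable_log_one_add_norm fun z hz => ?_)
    have hz : z ∈ closedBall (0 : ℂ) (1 / 2) :=
      mem_closedBall.2 ((mem_sphere.1 hz).trans_le (by rwa [abs_of_pos hr₀]))
    gcongr
    exact hC z hz
  · refine le_max_of_le_right ((circleAverage_log_one_add_norm_dslope_le (ρ := 1 / 2)
      (hf.continuousOn.mono hsphere) (hdf.continuousOn.mono hsphere) (by norm_num) (by norm_num)
      (by rw [abs_of_pos hr₀]; exact hr.le)).trans ?_)
    linarith [hM r ⟨hr₀, hr₁⟩]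

end DSlope

/-- **Lemma 1.1 of the paper (Nevanlinna-class part).**
If `h` is analytic on the open unit disc and the integrals
`∫ θ in 0..2π, log (1 + |h (r e^{iθ})|)` are uniformly bounded for `r ∈ (0,1)`
(i.e. `h` belongs to the Nevanlinna class `N`), then the function
`g z = (h z - h 0) / z` (with `g 0 = h' 0`) is analytic on the open unit disc and
the corresponding integrals for `g` are uniformly bounded as well
(i.e. `g` belongs to the Nevanlinna class `N`). -/
theorem nevanlinna_of_divided_difference
    (h : ℂ → ℂ) (hh : DifferentiableOn ℂ h (Metric.ball (0 : ℂ) 1))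
    (M : ℝ)
    (hM : ∀ r : ℝ, r ∈ Set.Ioo (0 : ℝ) 1 →
      (∫ θ in (0 : ℝ)..(2 * Real.pi),
        Real.log (1 + ‖(h ((r : ℂ) * Complex.exp ((θ : ℂ) * Complex.I)))‖)) ≤ M) :
    DifferentiableOn ℂ
      (fun z : ℂ => if z = 0 then deriv h 0 else (h z - h 0) / z) (Metric.ball (0 : ℂ) 1) ∧
    ∃ M' : ℝ, ∀ r : ℝ, r ∈ Set.Ioo (0 : ℝ) 1 →
      (∫ θ in (0 : ℝ)..(2 * Real.pi),
        Real.log (1 + ‖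
          ((fun z : ℂ => if z = 0 then deriv h 0 else (h z - h 0) / z)
            ((r : ℂ) * Complex.exp ((θ : ℂ) * Complex.I)))‖)) ≤ M' := by
  rw [← dslope_zero_eq_ite]
  simp only [integral_log_one_add_norm_eq_circleAverage] at hM ⊢
  obtain ⟨M', hM'⟩ := exists_circleAverage_log_one_add_norm_dslope_le hh (M := M / (2 * π))
    fun r hr => (le_div_iff₀' two_pi_pos).2 (hM r hr)
  exact ⟨(Complex.differentiableOn_dslope (ball_mem_nhds 0 one_pos)).2 hh, 2 * π * M',
    fun r hr => mul_le_mul_of_nonneg_left (hM' r hr) two_pi_pos.le⟩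
end

section
/- Let h be a function analytic on the open unit disc of ℂ. Suppose there is a measurable function h* : ℝ → ℂ such that for almost every θ ∈ [0, 2π] the radial limit lim_{r→1⁻} h(r e^{iθ}) exists and equals h*(θ), that ∫₀^{2π} log⁺|h*(θ) − h(0)| dθ < ∞, and that lim_{r→1⁻} ∫₀^{2π} log⁺|h(r e^{iθ}) − h(0)| dθ = ∫₀^{2π} log⁺|h*(θ) − h(0)| dθ (i.e., h − h(0) satisfies the Smirnov-class limit condition). Define g on the open unit disc by g(z) = (h(z) − h(0))/z for z ≠ 0 and g(0) = h′(0). Then lim_{r→1⁻} ∫₀^{2π} log⁺|g(r e^{iθ})| dθ = ∫₀^{2π} log⁺|h*(θ) − h(0)| dθ; note that the right-hand side equals the integral of log⁺ of the (a.e.) radial limit of g, since that limit is (h*(θ) − h(0))/e^{iθ}. -/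
/-!
Write `c_r(θ) = ‖h(r e^{iθ}) - h(0)‖`. On the circle `|z| = r` the divided difference has modulus
`c_r(θ) / r`, and for `0 < r ≤ 1` one has `log⁺ c ≤ log⁺ (c / r) ≤ log⁺ c - log r`. Integrating over
`[0, 2π]` squeezes the `log⁺`-means of `g` between those of `h - h(0)` and the same plus
`-2π log r`, which tends to `0` as `r → 1⁻`.
-/

open MeasureTheory Filter Real Set Topology Interval

lemma posLog_le_posLog_div {a r : ℝ} (ha : 0 ≤ a) (hr0 : 0 < r) (hr1 : r ≤ 1) :
    log⁺ a ≤ log⁺ (a / r) :=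
  posLog_le_posLog ha (le_div_self ha hr0 hr1)

lemma posLog_div_le_posLog_sub_log {a r : ℝ} (hr0 : 0 < r) (hr1 : r ≤ 1) :
    log⁺ (a / r) ≤ log⁺ a - log r :=
  calc log⁺ (a / r) ≤ log⁺ a + log⁺ r⁻¹ := posLog_mul
    _ = log⁺ a - log r := by
      rw [posLog_eq_log (x := r⁻¹) (by rw [abs_inv, abs_of_pos hr0]; exact one_le_inv_iff₀.2 ⟨hr0, hr1⟩),
        log_inv, sub_eq_add_neg]

lemma integral_posLog_div_mem_Icc {f : ℝ → ℝ} {a b r : ℝ} (hab : a ≤ b)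
    (hf : ContinuousOn f [[a, b]]) (hf0 : ∀ θ, 0 ≤ f θ) (hr0 : 0 < r) (hr1 : r ≤ 1) :
    ∫ θ in a..b, log⁺ (f θ / r) ∈
      Icc (∫ θ in a..b, log⁺ (f θ)) ((∫ θ in a..b, log⁺ (f θ)) - (b - a) * log r) := by
  have hF : IntervalIntegrable (fun θ ↦ log⁺ (f θ)) volume a b :=
    (continuous_posLog.comp_continuousOn hf).intervalIntegrable
  have hG : IntervalIntegrable (fun θ ↦ log⁺ (f θ / r)) volume a b :=
    (continuous_posLog.comp_continuousOn (hf.div_const r)).intervalIntegrable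
  refine ⟨intervalIntegral.integral_mono_on hab hF hG
    fun θ _ ↦ posLog_le_posLog_div (hf0 θ) hr0 hr1, ?_⟩
  calc ∫ θ in a..b, log⁺ (f θ / r) ≤ ∫ θ in a..b, (log⁺ (f θ) - log r) :=
        intervalIntegral.integral_mono_on hab hG (hF.sub intervalIntegrable_const)
          fun θ _ ↦ posLog_div_le_posLog_sub_log hr0 hr1
    _ = (∫ θ in a..b, log⁺ (f θ)) - (b - a) * log r := by
        rw [intervalIntegral.integral_sub hF intervalIntegrable_const,
          intervalIntegral.integral_const, smul_eq_mul]

lemma tendsto_integral_posLog_div_of_tendsto {f : ℝ → ℝ → ℝ} {a b L : ℝ} (hab : a ≤ b)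
    (hf : ∀ᶠ r in 𝓝[<] 1, ContinuousOn (f r) [[a, b]]) (hf0 : ∀ r θ, 0 ≤ f r θ)
    (hlim : Tendsto (fun r ↦ ∫ θ in a..b, log⁺ (f r θ)) (𝓝[<] 1) (𝓝 L)) :
    Tendsto (fun r ↦ ∫ θ in a..b, log⁺ (f r θ / r)) (𝓝[<] 1) (𝓝 L) := by
  have hlog : Tendsto (fun r ↦ (b - a) * log r) (𝓝[<] 1) (𝓝 0) := by
    simpa using ((continuousAt_log one_ne_zero).tendsto.const_mul (b - a)).mono_left
      nhdsWithin_le_nhds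
  have hr : ∀ᶠ r in 𝓝[<] (1 : ℝ), r ∈ Ioo 0 1 := Ioo_mem_nhdsLT zero_lt_one
  have hbounds := (hf.and hr).mono fun r ⟨hfr, hr⟩ ↦
    integral_posLog_div_mem_Icc hab hfr (hf0 r) hr.1 hr.2.le
  exact tendsto_of_tendsto_of_tendsto_of_le_of_le' hlim (by simpa using hlim.sub hlog)
    (hbounds.mono fun _ h ↦ h.1) (hbounds.mono fun _ h ↦ h.2)

lemma norm_ofReal_mul_exp_ofReal_mul_I {r : ℝ} (hr : 0 ≤ r) (θ : ℝ) :
    ‖(r : ℂ) * Complex.exp (θ * Complex.I)‖ = r := by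
  rw [norm_mul, Complex.norm_exp_ofReal_mul_I, mul_one, Complex.norm_of_nonneg hr]

theorem smirnov_limit_of_divided_difference_general
    (h : ℂ → ℂ) (hstar : ℝ → ℂ)
    (hh : DifferentiableOn ℂ h (Metric.ball (0 : ℂ) 1))
    (hlim : Tendsto
      (fun r : ℝ => ∫ θ in (0 : ℝ)..(2 * Real.pi),
        max 0 (Real.log (norm
          (h ((r : ℂ) * Complex.exp ((θ : ℂ) * Complex.I)) - h 0))))
      (nhdsWithin 1 (Set.Iio 1))
      (nhds (∫ θ in (0 : ℝ)..(2 * Real.pi),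
        max 0 (Real.log (norm (hstar θ - h 0)))))) :
    Tendsto
      (fun r : ℝ => ∫ θ in (0 : ℝ)..(2 * Real.pi),
        max 0 (Real.log (norm
          ((fun z : ℂ => if z = 0 then deriv h 0 else (h z - h 0) / z)
            ((r : ℂ) * Complex.exp ((θ : ℂ) * Complex.I))))))
      (nhdsWithin 1 (Set.Iio 1))
      (nhds (∫ θ in (0 : ℝ)..(2 * Real.pi),
        max 0 (Real.log (norm (hstar θ - h 0))))) := by
  set circle : ℝ → ℝ → ℂ := fun r θ ↦ (r : ℂ) * Complex.exp (θ * Complex.I)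
  have hr : ∀ᶠ r in 𝓝[<] (1 : ℝ), r ∈ Ioo 0 1 := Ioo_mem_nhdsLT zero_lt_one
  have hcont : ∀ᶠ r in 𝓝[<] (1 : ℝ),
      ContinuousOn (fun θ ↦ ‖h (circle r θ) - h 0‖) [[0, 2 * π]] :=
    hr.mono fun r hr ↦ ((hh.continuousOn.comp (by fun_prop : Continuous (circle r)).continuousOn
      fun θ _ ↦ by simp [circle, abs_of_pos hr.1, hr.2]).sub
        continuousOn_const).norm
  refine (tendsto_integral_posLog_div_of_tendsto (by positivity) hcont
    (fun _ _ ↦ norm_nonneg _) hlim).congr' (hr.mono fun r hr ↦ ?_)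
  refine intervalIntegral.integral_congr fun θ _ ↦ ?_
  have hz : circle r θ ≠ 0 := mul_ne_zero (by exact_mod_cast hr.1.ne') (Complex.exp_ne_zero _)
  simp only [circle, if_neg hz, norm_div, norm_ofReal_mul_exp_ofReal_mul_I hr.1.le]
  rfl

/-- **Lemma 1.1 of the paper (Smirnov-class limit identity).**
Let `h` be analytic on the open unit disc, with a measurable boundary-value function `h*`
attained as an a.e. radial limit on `[0, 2π]`.  Assume `∫₀^{2π} log⁺ |h*(θ) - h 0| dθ < ∞`
(formalized as integrability of the nonnegative integrand) and that `h - h 0` satisfies the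
Smirnov-class limit condition
`lim_{r→1⁻} ∫₀^{2π} log⁺ |h(r e^{iθ}) - h 0| dθ = ∫₀^{2π} log⁺ |h*(θ) - h 0| dθ`.
Then, for `g z = (h z - h 0)/z` (with `g 0 = h' 0`), one has
`lim_{r→1⁻} ∫₀^{2π} log⁺ |g(r e^{iθ})| dθ = ∫₀^{2π} log⁺ |h*(θ) - h 0| dθ`. -/
theorem smirnov_limit_of_divided_difference
    (h : ℂ → ℂ) (hstar : ℝ → ℂ)
    (hh : DifferentiableOn ℂ h (Metric.ball (0 : ℂ) 1))
    (hmeas : Measurable hstar)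
    (hradial : ∀ᵐ (θ : ℝ) ∂(volume.restrict (Set.Ioc (0 : ℝ) (2 * Real.pi))),
      Tendsto (fun r : ℝ => h ((r : ℂ) * Complex.exp ((θ : ℂ) * Complex.I)))
        (nhdsWithin 1 (Set.Iio 1)) (nhds (hstar θ)))
    (hint : IntegrableOn
      (fun θ : ℝ => max 0 (Real.log (norm (hstar θ - h 0))))
      (Set.Ioc (0 : ℝ) (2 * Real.pi)))
    (hlim : Tendsto
      (fun r : ℝ => ∫ θ in (0 : ℝ)..(2 * Real.pi),
        max 0 (Real.log (norm
          (h ((r : ℂ) * Complex.exp ((θ : ℂ) * Complex.I)) - h 0))))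
      (nhdsWithin 1 (Set.Iio 1))
      (nhds (∫ θ in (0 : ℝ)..(2 * Real.pi),
        max 0 (Real.log (norm (hstar θ - h 0)))))) :
    Tendsto
      (fun r : ℝ => ∫ θ in (0 : ℝ)..(2 * Real.pi),
        max 0 (Real.log (norm
          ((fun z : ℂ => if z = 0 then deriv h 0 else (h z - h 0) / z)
            ((r : ℂ) * Complex.exp ((θ : ℂ) * Complex.I))))))
      (nhdsWithin 1 (Set.Iio 1))
      (nhds (∫ θ in (0 : ℝ)..(2 * Real.pi),
        max 0 (Real.log (norm (hstar θ - h 0))))) :=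
  smirnov_limit_of_divided_difference_general h hstar hh hlim
end

section
/- Let X be a Banach space (over ℝ or ℂ), Ω : X → X a homogeneous map (Ω(λx) = λΩ(x) for all scalars λ and x ∈ X), W a linear subspace of X, and Λ : W → X a linear map such that C := sup_{w ∈ W, ‖w‖ ≤ 1} ‖Ω(w) − Λ(w)‖ is finite. Then for every n ≥ 1 and all vectors w₁, …, wₙ in the closed unit ball of W, 𝔼‖Ω(Σ_{i=1}^n ε_i w_i) − Σ_{i=1}^n ε_i Ω(w_i)‖ ≤ 2C · β_n(X). -/
/-!
Extend the bound on `Ω - Λ` from the unit ball of `W` to all of `W` by homogeneity: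
`‖Ω v - Λ v‖ ≤ C ‖v‖`. For a fixed choice of signs, with `S = ∑ εᵢ wᵢ ∈ W`, linearity of `Λ`
splits the defect as
`Ω S - ∑ εᵢ Ω wᵢ = (Ω S - Λ S) + ∑ εᵢ (Λ wᵢ - Ω wᵢ)`.
The first term has norm at most `C ‖S‖`, and the vectors `Λ wᵢ - Ω wᵢ` have norm at most `C`,
so averaging over the signs bounds each part by `C β_n(X)`.
-/

/-- The Rademacher average `𝔼 ‖∑ εᵢ xᵢ‖`: the average over all `2ⁿ` choices of signs
`εᵢ = ±1` of the norm of `∑ εᵢ xᵢ`. -/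
noncomputable def rademacherAvg {X : Type*} [NormedAddCommGroup X]
    (n : ℕ) (x : Fin n → X) : ℝ :=
  ((2 : ℝ) ^ n)⁻¹ * ∑ ε : Fin n → Bool, ‖∑ i, (if ε i then x i else -x i)‖

/-- `β_n(X)`: the supremum of `𝔼 ‖∑_{i=1}^n εᵢ xᵢ‖` over all `x₁, …, xₙ` in the closed
unit ball of `X`. -/
noncomputable def betaN (X : Type*) [NormedAddCommGroup X] (n : ℕ) : ℝ :=
  sSup {r : ℝ | ∃ x : Fin n → X, (∀ i, ‖x i‖ ≤ 1) ∧ r = rademacherAvg n x}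

open Finset

section SignedSum

variable {E F : Type*} {n : ℕ}

def signedSum [AddCommGroup E] (ε : Fin n → Bool) (x : Fin n → E) : E :=
  ∑ i, if ε i then x i else -x i

theorem map_signedSum [AddCommGroup E] [AddCommGroup F] {G : Type*} [FunLike G E F]
    [AddMonoidHomClass G E F] (g : G) (ε : Fin n → Bool) (x : Fin n → E) :
    g (signedSum ε x) = signedSum ε (g ∘ x) := by
  simp only [signedSum, map_sum, Function.comp_apply]
  exact sum_congr rfl fun i _ => by split <;> simp

theorem signedSum_sub [AddCommGroup E] (ε : Fin n → Bool) (x y : Fin n → E) :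
    signedSum ε x - signedSum ε y = signedSum ε (x - y) := by
  simp only [signedSum, ← sum_sub_distrib, Pi.sub_apply]
  exact sum_congr rfl fun i _ => by split <;> abel

theorem signedSum_smul {R : Type*} [Ring R] [AddCommGroup E] [Module R E] (ε : Fin n → Bool)
    (c : R) (x : Fin n → E) : signedSum ε (c • x) = c • signedSum ε x := by
  simp only [signedSum, smul_sum, Pi.smul_apply]
  exact sum_congr rfl fun i _ => by split <;> simp

theorem norm_signedSum_le [SeminormedAddCommGroup E] (ε : Fin n → Bool) (x : Fin n → E)
    (hx : ∀ i, ‖x i‖ ≤ 1) : ‖signedSum ε x‖ ≤ n :=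
  calc ‖signedSum ε x‖ ≤ ∑ i, ‖if ε i then x i else -x i‖ := norm_sum_le _ _
    _ ≤ ∑ _i : Fin n, (1 : ℝ) := sum_le_sum fun i _ => by split <;> simpa using hx i
    _ = n := by simp

end SignedSum

section Rademacher

variable {X : Type*} [NormedAddCommGroup X] {n : ℕ}

theorem rademacherAvg_eq (x : Fin n → X) :
    rademacherAvg n x = ((2 : ℝ) ^ n)⁻¹ * ∑ ε : Fin n → Bool, ‖signedSum ε x‖ :=
  rfl

theorem rademacherAvg_le_card {x : Fin n → X} (hx : ∀ i, ‖x i‖ ≤ 1) : rademacherAvg n x ≤ n :=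
  calc rademacherAvg n x ≤ ((2 : ℝ) ^ n)⁻¹ * ∑ _ε : Fin n → Bool, (n : ℝ) := by
        rw [rademacherAvg_eq]
        gcongr with ε
        exact norm_signedSum_le ε x hx
    _ = n := by simp

theorem rademacherAvg_le_betaN {x : Fin n → X} (hx : ∀ i, ‖x i‖ ≤ 1) :
    rademacherAvg n x ≤ betaN X n :=
  le_csSup ⟨n, by rintro r ⟨y, hy, rfl⟩; exact rademacherAvg_le_card hy⟩ ⟨x, hx, rfl⟩

theorem rademacherAvg_smul {𝕜 : Type*} [NormedField 𝕜] [NormedSpace 𝕜 X] (c : 𝕜)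
    (x : Fin n → X) : rademacherAvg n (c • x) = ‖c‖ * rademacherAvg n x := by
  simp only [rademacherAvg_eq, signedSum_smul, norm_smul, ← mul_sum]
  ring

theorem rademacherAvg_le_mul_betaN [NormedSpace ℝ X] {C : ℝ} (hC : 0 ≤ C) {x : Fin n → X}
    (hx : ∀ i, ‖x i‖ ≤ C) : rademacherAvg n x ≤ C * betaN X n := by
  have hx_eq : x = C • C⁻¹ • x := by
    rcases hC.eq_or_lt with rfl | hC_pos
    · exact funext fun i => by simpa using hx i
    · rw [smul_inv_smul₀ hC_pos.ne']
  have hx_scaled : ∀ i, ‖(C⁻¹ • x) i‖ ≤ 1 := fun i => by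
    rw [Pi.smul_apply, norm_smul, Real.norm_of_nonneg (inv_nonneg.mpr hC)]
    exact inv_mul_le_one_of_le₀ (hx i) hC
  rw [hx_eq, rademacherAvg_smul, Real.norm_of_nonneg hC]
  exact mul_le_mul_of_nonneg_left (rademacherAvg_le_betaN hx_scaled) hC

end Rademacher

theorem norm_le_mul_norm_of_map_smul {𝕜 E F : Type*} [RCLike 𝕜] [NormedAddCommGroup E]
    [NormedSpace 𝕜 E] [SeminormedAddCommGroup F] [NormedSpace 𝕜 F] {f : E → F}
    (hf : ∀ (c : 𝕜) (x : E), f (c • x) = c • f x) {C : ℝ} (hC : ∀ x, ‖x‖ ≤ 1 → ‖f x‖ ≤ C)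
    (x : E) : ‖f x‖ ≤ C * ‖x‖ := by
  rcases eq_or_ne x 0 with rfl | hx
  · have h0 : f 0 = 0 := by simpa using hf 0 0
    simp [h0]
  have hx_pos : 0 < ‖x‖ := norm_pos_iff.mpr hx
  calc ‖f x‖ = ‖x‖ * ‖f ((‖x‖⁻¹ : 𝕜) • x)‖ := by
        rw [hf, norm_smul, norm_inv, RCLike.norm_ofReal, abs_norm, mul_inv_cancel_left₀ hx_pos.ne']
    _ ≤ ‖x‖ * C := by gcongr; exact hC _ (norm_smul_inv_norm hx).le
    _ = C * ‖x‖ := mul_comm _ _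

theorem norm_sub_signedSum_le {E F G : Type*} [SeminormedAddCommGroup E]
    [SeminormedAddCommGroup F] [FunLike G E F] [AddMonoidHomClass G E F] {n : ℕ} (f : E → F)
    (g : G) {C : ℝ} (hfg : ∀ v, ‖f v - g v‖ ≤ C * ‖v‖) (ε : Fin n → Bool) (x : Fin n → E) :
    ‖f (signedSum ε x) - signedSum ε (f ∘ x)‖ ≤
      C * ‖signedSum ε x‖ + ‖signedSum ε (g ∘ x - f ∘ x)‖ := by
  have h_split : f (signedSum ε x) - signedSum ε (f ∘ x) =
      (f (signedSum ε x) - g (signedSum ε x)) + signedSum ε (g ∘ x - f ∘ x) := by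
    rw [← signedSum_sub, ← map_signedSum]
    abel
  rw [h_split]
  exact (norm_add_le _ _).trans (add_le_add_left (hfg _) _)

theorem avg_quasilinear_defect_le_general {𝕜 X : Type*} [RCLike 𝕜]
    [NormedAddCommGroup X] [NormedSpace 𝕜 X]
    (Ω : X → X) (hΩ : ∀ (c : 𝕜) (x : X), Ω (c • x) = c • Ω x)
    (W : Submodule 𝕜 X) (Λ : W →ₗ[𝕜] X) (C : ℝ)
    (hC : ∀ w : W, ‖(w : X)‖ ≤ 1 → ‖Ω (w : X) - Λ w‖ ≤ C)
    (n : ℕ) (w : Fin n → W) (hw : ∀ i, ‖(w i : X)‖ ≤ 1) :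
    ((2 : ℝ) ^ n)⁻¹ * ∑ ε : Fin n → Bool,
        ‖Ω (∑ i, (if ε i then (w i : X) else -(w i : X))) -
          ∑ i, (if ε i then Ω (w i : X) else -Ω (w i : X))‖
      ≤ 2 * C * betaN X n := by
  set ω : W → X := fun v => Ω v
  have hC0 : 0 ≤ C := (norm_nonneg _).trans (hC 0 (by simp))
  have h_lin : ∀ v, ‖ω v - Λ v‖ ≤ C * ‖v‖ :=
    norm_le_mul_norm_of_map_smul (fun (c : 𝕜) v => by simp [ω, hΩ, smul_sub]) hC
  have h_defect : ∀ i, ‖(Λ ∘ w - ω ∘ w) i‖ ≤ C := fun i => by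
    simpa [norm_sub_rev] using hC (w i) (hw i)
  calc _ = ((2 : ℝ) ^ n)⁻¹ * ∑ ε : Fin n → Bool, ‖ω (signedSum ε w) - signedSum ε (ω ∘ w)‖ := by
        simp only [ω, ← Submodule.subtype_apply, map_signedSum]
        rfl
    _ ≤ ((2 : ℝ) ^ n)⁻¹ * ∑ ε : Fin n → Bool,
          (C * ‖signedSum ε w‖ + ‖signedSum ε (Λ ∘ w - ω ∘ w)‖) := by
        gcongr with ε
        exact norm_sub_signedSum_le ω Λ h_lin ε w
    _ = C * rademacherAvg n (W.subtype ∘ w) + rademacherAvg n (Λ ∘ w - ω ∘ w) := by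
        simp only [rademacherAvg_eq, ← map_signedSum, Submodule.subtype_apply, Submodule.coe_norm,
          sum_add_distrib, ← mul_sum]
        ring
    _ ≤ C * betaN X n + C * betaN X n :=
        add_le_add (mul_le_mul_of_nonneg_left (rademacherAvg_le_betaN hw) hC0)
          (letI := NormedSpace.restrictScalars ℝ 𝕜 X; rademacherAvg_le_mul_betaN hC0 h_defect)
    _ = 2 * C * betaN X n := by ring

/-- **Lemma 2.8 of the paper (with the constant `K₁ = 2C` explicit).**
If `Ω : X → X` is homogeneous and trivial on a subspace `W`, witnessed by a linear map
`Λ : W → X` with `‖Ω w - Λ w‖ ≤ C` on the unit ball of `W`, then for any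
`w₁, …, wₙ` in the closed unit ball of `W`,
`𝔼 ‖Ω (∑ εᵢ wᵢ) - ∑ εᵢ Ω wᵢ‖ ≤ 2 C β_n(X)`. -/
theorem avg_quasilinear_defect_le {𝕜 X : Type*} [RCLike 𝕜]
    [NormedAddCommGroup X] [NormedSpace 𝕜 X] [CompleteSpace X]
    (Ω : X → X) (hΩ : ∀ (c : 𝕜) (x : X), Ω (c • x) = c • Ω x)
    (W : Submodule 𝕜 X) (Λ : W →ₗ[𝕜] X) (C : ℝ)
    (hC : ∀ w : W, ‖(w : X)‖ ≤ 1 → ‖Ω (w : X) - Λ w‖ ≤ C)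
    (n : ℕ) (hn : 1 ≤ n) (w : Fin n → W) (hw : ∀ i, ‖(w i : X)‖ ≤ 1) :
    ((2 : ℝ) ^ n)⁻¹ * ∑ ε : Fin n → Bool,
        ‖Ω (∑ i, (if ε i then (w i : X) else -(w i : X))) -
          ∑ i, (if ε i then Ω (w i : X) else -Ω (w i : X))‖
      ≤ 2 * C * betaN X n :=
  avg_quasilinear_defect_le_general Ω hΩ W Λ C hC n w hw
end
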